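/- arXiv:2510.05298 — 5 statements merged into one kernel-verified Lean document; each statement's English description precedes it below -/
import Mathlib

section
/- (Bounded increments of the martingale for 0 < q < 1.) If 0 < q < 1 and Y_n := X_n − n + (1 − q^{X_n})/(1 − q), then almost surely, for every n ≥ 1, |Y_n − Y_{n-1}| ≤ 2. More precisely, |Y_n − Y_{n-1}| ≤ 1 + q^{X_{n-1}} almost surely. -/
open MeasureTheory Filter Topology

/-- `X` is a Markov chain on `ℕ` with `X 0 = 0` and transition probabilities
`T(i, i+1) = 1/(q^i + 1)`, `T(i, i) = q^i/(q^i + 1)`, `T(i, j) = 0` otherwise,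
encoded by conditioning on every finite path. -/
def IsQChain {Ω : Type*} [MeasurableSpace Ω] (P : Measure Ω)
    (X : ℕ → Ω → ℕ) (q : ℝ) : Prop :=
  (∀ n, Measurable (X n)) ∧
  (∀ᵐ ω ∂P, X 0 ω = 0) ∧
  ∀ (n : ℕ) (f : ℕ → ℕ),
    P {ω | (∀ k ≤ n, X k ω = f k) ∧ X (n + 1) ω = f n + 1}
      = ENNReal.ofReal (1 / (q ^ f n + 1)) * P {ω | ∀ k ≤ n, X k ω = f k} ∧
    P {ω | (∀ k ≤ n, X k ω = f k) ∧ X (n + 1) ω = f n}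
      = ENNReal.ofReal (q ^ f n / (q ^ f n + 1)) * P {ω | ∀ k ≤ n, X k ω = f k} ∧
    ∀ j : ℕ, j ≠ f n → j ≠ f n + 1 →
      P {ω | (∀ k ≤ n, X k ω = f k) ∧ X (n + 1) ω = j} = 0

/-- Bounded increments of the martingale when `0 < q < 1`. -/
theorem stmt15 {Ω : Type*} [MeasurableSpace Ω] (P : Measure Ω) [IsProbabilityMeasure P]
    (q : ℝ) (X : ℕ → Ω → ℕ) (hq : 0 < q) (hX : IsQChain P X q) (hq1 : q < 1)
    (Y : ℕ → Ω → ℝ)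
    (hY : ∀ n ω, Y n ω = (X n ω : ℝ) - n + (1 - q ^ X n ω) / (1 - q)) :
    ∀ᵐ ω ∂P, ∀ n : ℕ, 1 ≤ n →
      |Y n ω - Y (n - 1) ω| ≤ 1 + q ^ X (n - 1) ω ∧ |Y n ω - Y (n - 1) ω| ≤ 2 := by
  obtain ⟨hm, h0, hT⟩ := hX
  have hstep : ∀ᵐ ω ∂P, ∀ n, X (n + 1) ω = X n ω ∨ X (n + 1) ω = X n ω + 1 := by
    rw [ae_all_iff]
    intro n
    rw [ae_iff]
    set F : (Fin (n + 1) → ℕ) → ℕ → ℕ :=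
      fun v k => if h : k < n + 1 then v ⟨k, h⟩ else 0 with hF
    have hsub : {ω | ¬(X (n + 1) ω = X n ω ∨ X (n + 1) ω = X n ω + 1)} ⊆
        ⋃ (v : Fin (n + 1) → ℕ) (j : ℕ),
          {ω | (∀ k ≤ n, X k ω = F v k) ∧ X (n + 1) ω = j ∧ j ≠ F v n ∧ j ≠ F v n + 1} := by
      intro ω hω
      push_neg at hω
      refine Set.mem_iUnion.2 ⟨fun k => X k ω, Set.mem_iUnion.2 ⟨X (n + 1) ω, ?_⟩⟩
      have hFv : ∀ k ≤ n, F (fun k : Fin (n + 1) => X k ω) k = X k ω := by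
        intro k hk
        simp [hF, Nat.lt_succ_of_le hk, not_lt.2 hk]
      exact ⟨fun k hk => (hFv k hk).symm, rfl, by rw [hFv n le_rfl]; exact hω.1,
        by rw [hFv n le_rfl]; exact hω.2⟩
    refine measure_mono_null hsub (measure_iUnion_null fun v => measure_iUnion_null fun j => ?_)
    by_cases h1 : j = F v n
    · convert measure_empty (μ := P)
      ext ω; simp [h1]
    by_cases h2 : j = F v n + 1
    · convert measure_empty (μ := P)
      ext ω; simp [h2]
    refine measure_mono_null ?_ ((hT n (F v)).2.2 j h1 h2)
    intro ω hω
    exact ⟨hω.1, hω.2.1⟩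
  filter_upwards [hstep] with ω hω n hn
  obtain ⟨m, rfl⟩ : ∃ m, n = m + 1 := ⟨n - 1, (Nat.succ_pred_eq_of_pos hn).symm⟩
  simp only [Nat.add_sub_cancel]
  have hq0 : (0:ℝ) < 1 - q := by linarith
  have hpow0 : (0:ℝ) < q ^ X m ω := pow_pos hq _
  have hpow1 : q ^ X m ω ≤ 1 := pow_le_one₀ hq.le hq1.le
  have key : Y (m + 1) ω - Y m ω = -1 ∨ Y (m + 1) ω - Y m ω = q ^ X m ω := by
    rcases hω m with h | h
    · left
      rw [hY, hY, h]
      push_cast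
      ring
    · right
      rw [hY, hY, h]
      have : q ^ (X m ω + 1) = q ^ X m ω * q := pow_succ q _
      rw [this]
      push_cast
      field_simp
      ring
  rcases key with h | h <;> rw [h]
  · rw [abs_neg, abs_one]
    constructor <;> linarith
  · rw [abs_of_pos hpow0]
    constructor <;> linarith
end

section
/- (Variance identity for the martingale.) If q ≠ 1 and Y_n := X_n − n + (1 − q^{X_n})/(1 − q), then for every n ≥ 1 and every i with 1 ≤ i ≤ n, E[(Y_i − Y_{i-1})^2] = E[q^{X_{i-1}}], and consequently Var(Y_n) = E[Y_n^2] = Σ_{i=1}^{n} E[q^{X_{i-1}}]. -/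
open MeasureTheory Filter Topology

lemma aux_joint {Ω : Type*} [MeasurableSpace Ω] (P : Measure Ω)
    (q : ℝ) (X : ℕ → Ω → ℕ) (hX : IsQChain P X q) (n m : ℕ) :
    P {ω | X n ω = m ∧ X (n+1) ω = m+1}
        = ENNReal.ofReal (1/(q^m+1)) * P {ω | X n ω = m} ∧
      P {ω | X n ω = m ∧ X (n+1) ω = m}
        = ENNReal.ofReal (q^m/(q^m+1)) * P {ω | X n ω = m} ∧
      ∀ j, j ≠ m → j ≠ m + 1 → P {ω | X n ω = m ∧ X (n+1) ω = j} = 0 := by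
  obtain ⟨hmeas, -, htrans⟩ := hX
  set G := {g : Fin (n+1) → ℕ // g ⟨n, n.lt_succ_self⟩ = m} with hG
  let fg : G → ℕ → ℕ := fun g k => if h : k < n+1 then g.1 ⟨k, h⟩ else 0
  let E : G → Set Ω := fun g => {ω | ∀ k ≤ n, X k ω = fg g k}
  have hfgn : ∀ g : G, fg g n = m := by
    intro g
    simp only [fg, dif_pos n.lt_succ_self]
    exact g.2
  have hEmeas : ∀ g, MeasurableSet (E g) := by
    intro g
    have : E g = ⋂ k ∈ Set.Iic n, X k ⁻¹' {fg g k} := by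
      ext ω; simp [E, Set.mem_iInter]
    rw [this]
    exact MeasurableSet.biInter (Set.to_countable _)
      fun k _ => hmeas k (measurableSet_singleton _)
  have hEdisj : Pairwise (Function.onFun Disjoint E) := by
    intro g g' hgg'
    refine Set.disjoint_left.2 fun ω hω hω' => hgg' ?_
    apply Subtype.ext; funext k
    have h1 := hω k.1 (Nat.lt_succ_iff.mp k.2)
    have h2 := hω' k.1 (Nat.lt_succ_iff.mp k.2)
    simp only [fg, dif_pos k.2, Fin.eta] at h1 h2
    exact h1.symm.trans h2
  have hU : ∀ j, {ω | X n ω = m ∧ X (n+1) ω = j}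
      = ⋃ g : G, (E g ∩ {ω | X (n+1) ω = j}) := by
    intro j; ext ω
    simp only [Set.mem_setOf_eq, Set.mem_iUnion, Set.mem_inter_iff]
    constructor
    · rintro ⟨hXn, hXj⟩
      refine ⟨⟨fun k => X k.1 ω, hXn⟩, fun k hk => ?_, hXj⟩
      simp [fg, dif_pos (Nat.lt_succ_iff.mpr hk)]
      intro h; omega
    · rintro ⟨g, hg, hXj⟩
      exact ⟨(hg n le_rfl).trans (hfgn g), hXj⟩
  have hU2 : {ω | X n ω = m} = ⋃ g : G, E g := by
    ext ω
    simp only [Set.mem_setOf_eq, Set.mem_iUnion]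
    constructor
    · intro hXn
      exact ⟨⟨fun k => X k.1 ω, hXn⟩, fun k hk => by
        simp [fg, dif_pos (Nat.lt_succ_iff.mpr hk)]
        intro h; omega⟩
    · rintro ⟨g, hg⟩
      exact (hg n le_rfl).trans (hfgn g)
  have hPm : P {ω | X n ω = m} = ∑' g : G, P (E g) := by
    rw [hU2]; exact measure_iUnion hEdisj hEmeas
  have hdisj2 : ∀ j, Pairwise (Function.onFun Disjoint
      (fun g : G => E g ∩ {ω | X (n+1) ω = j})) :=
    fun j => hEdisj.mono fun g g' h =>
      h.mono Set.inter_subset_left Set.inter_subset_left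
  have hmeas2 : ∀ j (g : G), MeasurableSet (E g ∩ {ω | X (n+1) ω = j}) :=
    fun j g => (hEmeas g).inter (hmeas (n+1) (measurableSet_singleton j))
  have hPj : ∀ j, P {ω | X n ω = m ∧ X (n+1) ω = j}
      = ∑' g : G, P (E g ∩ {ω | X (n+1) ω = j}) := by
    intro j; rw [hU j]; exact measure_iUnion (hdisj2 j) (hmeas2 j)
  refine ⟨?_, ?_, ?_⟩
  · rw [hPj (m+1), hPm, ← ENNReal.tsum_mul_left]
    refine tsum_congr fun g => ?_
    have h := (htrans n (fg g)).1
    rw [hfgn g] at h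
    exact h
  · rw [hPj m, hPm, ← ENNReal.tsum_mul_left]
    refine tsum_congr fun g => ?_
    have h := (htrans n (fg g)).2.1
    rw [hfgn g] at h
    exact h
  · intro j hj1 hj2
    rw [hPj j]
    have hz : ∀ g : G, P (E g ∩ {ω | X (n+1) ω = j}) = 0 := by
      intro g
      have h := (htrans n (fg g)).2.2 j (by rw [hfgn g]; exact hj1)
        (by rw [hfgn g]; exact hj2)
      exact h
    simp [hz]

lemma aux_int {Ω : Type*} [MeasurableSpace Ω] (P : Measure Ω) [IsProbabilityMeasure P]
    (X : ℕ → Ω → ℕ) (hmeas : ∀ n, Measurable (X n))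
    (hstep : ∀ᵐ ω ∂P, ∀ k, X k ω ≤ k ∧ (X (k+1) ω = X k ω ∨ X (k+1) ω = X k ω + 1))
    (n : ℕ) (F : ℕ → ℕ → ℝ) :
    ∫ ω, F (X n ω) (X (n+1) ω) ∂P
      = ∑ m ∈ Finset.range (n+1),
          ((P {ω | X n ω = m ∧ X (n+1) ω = m}).toReal * F m m
           + (P {ω | X n ω = m ∧ X (n+1) ω = m+1}).toReal * F m (m+1)) := by
  classical
  set A : ℕ → ℕ → Set Ω := fun m j => {ω | X n ω = m ∧ X (n+1) ω = j} with hA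
  have hAmeas : ∀ m j, MeasurableSet (A m j) := fun m j =>
    (hmeas n (measurableSet_singleton m)).inter
      (hmeas (n+1) (measurableSet_singleton j))
  have hae : (fun ω => F (X n ω) (X (n+1) ω)) =ᵐ[P]
      fun ω => ∑ m ∈ Finset.range (n+1),
        ((A m m).indicator (fun _ => F m m) ω
          + (A m (m+1)).indicator (fun _ => F m (m+1)) ω) := by
    filter_upwards [hstep] with ω hω
    obtain ⟨hle, hst⟩ := hω n
    rw [Finset.sum_eq_single (X n ω)]
    · rcases hst with h | h
      · rw [Set.indicator_of_mem (by exact ⟨rfl, h⟩),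
          Set.indicator_of_notMem (by rintro ⟨-, h2⟩; omega), h, add_zero]
      · rw [Set.indicator_of_notMem (by rintro ⟨-, h2⟩; omega),
          Set.indicator_of_mem (by exact ⟨rfl, h⟩), h, zero_add]
    · intro m _ hm
      rw [Set.indicator_of_notMem (by rintro ⟨h1, -⟩; exact hm h1.symm),
        Set.indicator_of_notMem (by rintro ⟨h1, -⟩; exact hm h1.symm), add_zero]
    · intro h
      exact absurd (Finset.mem_range.mpr (Nat.lt_succ_of_le hle)) h
  rw [integral_congr_ae hae, integral_finset_sum]
  · refine Finset.sum_congr rfl fun m _ => ?_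
    rw [integral_add, integral_indicator_const _ (hAmeas m m),
      integral_indicator_const _ (hAmeas m (m+1)), smul_eq_mul, smul_eq_mul]
    · rfl
    · exact (integrable_indicator_iff (hAmeas m m)).2
        (integrableOn_const (C := F m m) (measure_ne_top P _) enorm_ne_top)
    · exact (integrable_indicator_iff (hAmeas m (m+1))).2
        (integrableOn_const (C := F m (m+1)) (measure_ne_top P _) enorm_ne_top)
  · intro m _
    exact ((integrable_indicator_iff (hAmeas m m)).2
        (integrableOn_const (measure_ne_top P _) enorm_ne_top)).add
      ((integrable_indicator_iff (hAmeas m (m+1))).2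
        (integrableOn_const (measure_ne_top P _) enorm_ne_top))

/-- Variance identity for the martingale. -/
theorem stmt16 {Ω : Type*} [MeasurableSpace Ω] (P : Measure Ω) [IsProbabilityMeasure P]
    (q : ℝ) (X : ℕ → Ω → ℕ) (hq : 0 < q) (hX : IsQChain P X q) (hq1 : q ≠ 1)
    (Y : ℕ → Ω → ℝ)
    (hY : ∀ n ω, Y n ω = (X n ω : ℝ) - n + (1 - q ^ X n ω) / (1 - q)) :
    (∀ i : ℕ, 1 ≤ i →
        ∫ ω, (Y i ω - Y (i - 1) ω) ^ 2 ∂P = ∫ ω, q ^ X (i - 1) ω ∂P) ∧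
      ∀ n : ℕ, 1 ≤ n →
        ProbabilityTheory.variance (Y n) P = ∫ ω, (Y n ω) ^ 2 ∂P ∧
        ∫ ω, (Y n ω) ^ 2 ∂P = ∑ i ∈ Finset.Icc 1 n, ∫ ω, q ^ X (i - 1) ω ∂P := by
  classical
  have hmeas := hX.1
  have h0 := hX.2.1
  have h1q : (1:ℝ) - q ≠ 0 := sub_ne_zero_of_ne (Ne.symm hq1)
  -- a.e. step structure
  have hbad : ∀ n : ℕ, ∀ᵐ ω ∂P, X (n+1) ω = X n ω ∨ X (n+1) ω = X n ω + 1 := by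
    intro n
    rw [ae_iff]
    refine measure_mono_null (fun ω hω => ?_) (measure_iUnion_null
      (s := fun p : ℕ × ℕ => if p.2 ≠ p.1 ∧ p.2 ≠ p.1 + 1
        then {ω | X n ω = p.1 ∧ X (n+1) ω = p.2} else ∅) ?_)
    · simp only [Set.mem_setOf_eq, not_or] at hω
      refine Set.mem_iUnion.2 ⟨(X n ω, X (n+1) ω), ?_⟩
      rw [if_pos ⟨hω.1, hω.2⟩]
      exact ⟨rfl, rfl⟩
    · intro p
      split_ifs with h
      · exact (aux_joint P q X hX n p.1).2.2 p.2 h.1 h.2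
      · simp
  have hstep : ∀ᵐ ω ∂P, ∀ k, X k ω ≤ k ∧
      (X (k+1) ω = X k ω ∨ X (k+1) ω = X k ω + 1) := by
    filter_upwards [h0, ae_all_iff.2 hbad] with ω h0ω hω
    intro k
    induction k with
    | zero => exact ⟨le_of_eq h0ω, hω 0⟩
    | succ k ih =>
      refine ⟨?_, hω (k+1)⟩
      have h1 := ih.1
      rcases hω k with h | h <;> omega
  -- key probability relation
  have hSU : ∀ n m : ℕ, (P {ω | X n ω = m ∧ X (n+1) ω = m}).toReal
      = q ^ m * (P {ω | X n ω = m ∧ X (n+1) ω = m+1}).toReal := by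
    intro n m
    obtain ⟨hup, hstay, -⟩ := aux_joint P q X hX n m
    have hq0 : (0:ℝ) < q ^ m + 1 := by positivity
    rw [hup, hstay, ENNReal.toReal_mul, ENNReal.toReal_mul,
      ENNReal.toReal_ofReal (by positivity), ENNReal.toReal_ofReal (by positivity)]
    ring
  have hYfun : ∀ k, Y k = fun ω => ((X k ω : ℝ) - k + (1 - q ^ X k ω) / (1 - q)) :=
    fun k => funext fun ω => hY k ω
  -- per-step identities
  have key : ∀ n : ℕ,
      (∫ ω, (Y (n+1) ω - Y n ω)^2 ∂P = ∫ ω, q ^ X n ω ∂P) ∧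
      (∫ ω, Y (n+1) ω ∂P = ∫ ω, Y n ω ∂P) ∧
      (∫ ω, (Y (n+1) ω)^2 ∂P = ∫ ω, (Y n ω)^2 ∂P + ∫ ω, q ^ X n ω ∂P) := by
    intro n
    have IΔ : ∫ ω, (((X (n+1) ω : ℝ) - (↑(n+1):ℝ) + (1 - q ^ X (n+1) ω)/(1-q))
          - ((X n ω : ℝ) - (n:ℝ) + (1 - q ^ X n ω)/(1-q)))^2 ∂P
        = ∑ m ∈ Finset.range (n+1),
            ((P {ω | X n ω = m ∧ X (n+1) ω = m}).toReal
                * (((m:ℝ) - (↑(n+1):ℝ) + (1 - q ^ m)/(1-q))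
                    - ((m:ℝ) - (n:ℝ) + (1 - q ^ m)/(1-q)))^2
              + (P {ω | X n ω = m ∧ X (n+1) ω = m+1}).toReal
                * (((↑(m+1):ℝ) - (↑(n+1):ℝ) + (1 - q ^ (m+1))/(1-q))
                    - ((m:ℝ) - (n:ℝ) + (1 - q ^ m)/(1-q)))^2) :=
      aux_int P X hmeas hstep n (fun m j =>
        (((j:ℝ) - (↑(n+1):ℝ) + (1 - q ^ j)/(1-q))
          - ((m:ℝ) - (n:ℝ) + (1 - q ^ m)/(1-q)))^2)
    have Iq : ∫ ω, q ^ X n ω ∂P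
        = ∑ m ∈ Finset.range (n+1),
            ((P {ω | X n ω = m ∧ X (n+1) ω = m}).toReal * q ^ m
              + (P {ω | X n ω = m ∧ X (n+1) ω = m+1}).toReal * q ^ m) :=
      aux_int P X hmeas hstep n (fun m _ => q ^ m)
    have IY1 : ∫ ω, ((X (n+1) ω : ℝ) - (↑(n+1):ℝ) + (1 - q ^ X (n+1) ω)/(1-q)) ∂P
        = ∑ m ∈ Finset.range (n+1),
            ((P {ω | X n ω = m ∧ X (n+1) ω = m}).toReal
                * ((m:ℝ) - (↑(n+1):ℝ) + (1 - q ^ m)/(1-q))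
              + (P {ω | X n ω = m ∧ X (n+1) ω = m+1}).toReal
                * ((↑(m+1):ℝ) - (↑(n+1):ℝ) + (1 - q ^ (m+1))/(1-q))) :=
      aux_int P X hmeas hstep n (fun m j => ((j:ℝ) - (↑(n+1):ℝ) + (1 - q ^ j)/(1-q)))
    have IY0 : ∫ ω, ((X n ω : ℝ) - (n:ℝ) + (1 - q ^ X n ω)/(1-q)) ∂P
        = ∑ m ∈ Finset.range (n+1),
            ((P {ω | X n ω = m ∧ X (n+1) ω = m}).toReal
                * ((m:ℝ) - (n:ℝ) + (1 - q ^ m)/(1-q))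
              + (P {ω | X n ω = m ∧ X (n+1) ω = m+1}).toReal
                * ((m:ℝ) - (n:ℝ) + (1 - q ^ m)/(1-q))) :=
      aux_int P X hmeas hstep n (fun m _ => ((m:ℝ) - (n:ℝ) + (1 - q ^ m)/(1-q)))
    have IY1sq : ∫ ω, ((X (n+1) ω : ℝ) - (↑(n+1):ℝ) + (1 - q ^ X (n+1) ω)/(1-q))^2 ∂P
        = ∑ m ∈ Finset.range (n+1),
            ((P {ω | X n ω = m ∧ X (n+1) ω = m}).toReal
                * ((m:ℝ) - (↑(n+1):ℝ) + (1 - q ^ m)/(1-q))^2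
              + (P {ω | X n ω = m ∧ X (n+1) ω = m+1}).toReal
                * ((↑(m+1):ℝ) - (↑(n+1):ℝ) + (1 - q ^ (m+1))/(1-q))^2) :=
      aux_int P X hmeas hstep n (fun m j => ((j:ℝ) - (↑(n+1):ℝ) + (1 - q ^ j)/(1-q))^2)
    have IY0sq : ∫ ω, ((X n ω : ℝ) - (n:ℝ) + (1 - q ^ X n ω)/(1-q))^2 ∂P
        = ∑ m ∈ Finset.range (n+1),
            ((P {ω | X n ω = m ∧ X (n+1) ω = m}).toReal
                * ((m:ℝ) - (n:ℝ) + (1 - q ^ m)/(1-q))^2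
              + (P {ω | X n ω = m ∧ X (n+1) ω = m+1}).toReal
                * ((m:ℝ) - (n:ℝ) + (1 - q ^ m)/(1-q))^2) :=
      aux_int P X hmeas hstep n (fun m _ => ((m:ℝ) - (n:ℝ) + (1 - q ^ m)/(1-q))^2)
    refine ⟨?_, ?_, ?_⟩
    · simp only [hYfun]
      rw [IΔ, Iq]
      refine Finset.sum_congr rfl fun m _ => ?_
      rw [hSU n m]
      push_cast
      field_simp
      ring
    · simp only [hYfun]
      rw [IY1, IY0]
      refine Finset.sum_congr rfl fun m _ => ?_
      rw [hSU n m]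
      push_cast
      field_simp
      ring
    · simp only [hYfun]
      rw [IY1sq, IY0sq, Iq, ← Finset.sum_add_distrib]
      refine Finset.sum_congr rfl fun m _ => ?_
      rw [hSU n m]
      push_cast
      field_simp
      ring
  -- base case
  have hY0ae : Y 0 =ᵐ[P] 0 := by
    filter_upwards [h0] with ω hω
    rw [hY, hω]
    norm_num
  have hmean : ∀ n : ℕ, ∫ ω, Y n ω ∂P = 0 := by
    intro n
    induction n with
    | zero =>
      rw [integral_congr_ae hY0ae]
      simp
    | succ k ih => rw [(key k).2.1, ih]
  have hvar : ∀ n : ℕ, ∫ ω, (Y n ω)^2 ∂P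
      = ∑ i ∈ Finset.Icc 1 n, ∫ ω, q ^ X (i - 1) ω ∂P := by
    intro n
    induction n with
    | zero =>
      rw [show (Finset.Icc 1 0 : Finset ℕ) = ∅ from Finset.Icc_eq_empty (by omega)]
      have h2 : (fun ω => Y 0 ω ^ 2) =ᵐ[P] fun _ => (0:ℝ) := by
        filter_upwards [hY0ae] with ω h
        simp only [Pi.zero_apply] at h
        simp [h]
      rw [integral_congr_ae h2]
      simp
    | succ k ih =>
      rw [(key k).2.2, ih, Finset.sum_Icc_succ_top (Nat.succ_le_succ (Nat.zero_le k))]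
      simp
  -- Memℒp
  have hmem : ∀ n : ℕ, MemLp (Y n) 2 P := by
    intro n
    refine MemLp.of_bound ?_
      (∑ m ∈ Finset.range (n+1), |(m:ℝ) - (n:ℝ) + (1 - q ^ m)/(1-q)|) ?_
    · rw [hYfun n]
      exact ((measurable_from_nat
        (f := fun m : ℕ => (m:ℝ) - (n:ℝ) + (1 - q ^ m)/(1-q))).comp
          (hmeas n)).aestronglyMeasurable
    · filter_upwards [hstep] with ω hω
      rw [hY, Real.norm_eq_abs]
      have hmem' : X n ω ∈ Finset.range (n+1) :=
        Finset.mem_range.mpr (Nat.lt_succ_of_le (hω n).1)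
      exact Finset.single_le_sum (f := fun m : ℕ => |(m:ℝ) - (n:ℝ) + (1 - q ^ m)/(1-q)|)
        (fun m _ => abs_nonneg _) hmem'
  refine ⟨?_, ?_⟩
  · intro i hi
    obtain ⟨n, rfl⟩ : ∃ n, i = n + 1 := ⟨i - 1, by omega⟩
    simpa using (key n).1
  · intro n hn
    refine ⟨?_, hvar n⟩
    rw [ProbabilityTheory.variance_eq_sub (hmem n), hmean n]
    simp [Pi.pow_apply]
end

section
/- (Azuma-type lower bound for 0 < q < 1.) If 0 < q < 1, then for every δ > 0, almost surely there exists N such that for all n ≥ N, X_n ≥ n − n^{1/2 + δ} − 1/(1 − q). -/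
/-!
Let `c = (1 + q) / 2 < 1`. One step of the chain multiplies the moment `E[q ^ X n]` by
`(q ^ X n + q) / (q ^ X n + 1) ≤ c`, so `E[q ^ X n] ≤ c ^ n`. The chain holds at step `n` with
probability `E[q ^ X n / (q ^ X n + 1)] ≤ c ^ n`, which is summable; by Borel–Cantelli it almost
surely moves up at every step from some `N` on, so `X n ≥ n - N`, and `N ≤ n ^ (1/2 + δ)`
eventually.
-/

open MeasureTheory Filter Topology

open Set
open scoped ENNReal

section Fibers

variable {Ω β : Type*} [MeasurableSpace Ω] [MeasurableSpace β] [Countable β]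
  [MeasurableSingletonClass β] {μ : Measure Ω} {Y : Ω → β}

theorem measure_eq_tsum_preimage_singleton_inter (hY : Measurable Y) (s : Set Ω) :
    μ s = ∑' b, μ (Y ⁻¹' {b} ∩ s) := by
  have hfiber (b : β) : MeasurableSet (Y ⁻¹' {b}) := hY (measurableSet_singleton b)
  calc μ s = μ.restrict s (⋃ b, Y ⁻¹' {b}) := by
        rw [← preimage_iUnion, iUnion_of_singleton, preimage_univ, Measure.restrict_apply_univ]
    _ = ∑' b, μ.restrict s (Y ⁻¹' {b}) :=
        measure_iUnion (fun b b' h => (disjoint_singleton.2 h).preimage Y) hfiber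
    _ = ∑' b, μ (Y ⁻¹' {b} ∩ s) := by simp only [Measure.restrict_apply (hfiber _)]

theorem measure_eq_mul_of_forall_fiber (hY : Measurable Y) {s t : Set Ω} {c : ℝ≥0∞}
    (h : ∀ ω₀, μ ({ω | Y ω = Y ω₀} ∩ s) = c * μ ({ω | Y ω = Y ω₀} ∩ t)) :
    μ s = c * μ t := by
  rw [measure_eq_tsum_preimage_singleton_inter hY s, measure_eq_tsum_preimage_singleton_inter hY t,
    ← ENNReal.tsum_mul_left]
  refine tsum_congr fun b => ?_
  by_cases hb : ∃ ω₀, Y ω₀ = b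
  · obtain ⟨ω₀, rfl⟩ := hb
    exact h ω₀
  · have hempty : Y ⁻¹' {b} = ∅ := eq_empty_of_forall_notMem fun ω hω => hb ⟨ω, hω⟩
    simp [hempty]

end Fibers

theorem exists_le_add_of_eventually_succ_eq {a : ℕ → ℕ} (h : ∀ᶠ n in atTop, a (n + 1) = a n + 1) :
    ∃ C, ∀ᶠ n in atTop, n ≤ a n + C := by
  obtain ⟨N, hN⟩ := eventually_atTop.1 h
  refine ⟨N, eventually_atTop.2 ⟨N, fun n hn => ?_⟩⟩
  induction n, hn using Nat.le_induction with
  | base => omega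
  | succ n hn ih => rw [hN n hn]; omega

theorem add_div_add_one_le {x q : ℝ} (hx0 : 0 ≤ x) (hx1 : x ≤ 1) (hq1 : q ≤ 1) :
    (x + q) / (x + 1) ≤ (1 + q) / 2 := by
  rw [div_le_div_iff₀ (by linarith) two_pos]
  nlinarith [mul_nonneg (sub_nonneg.2 hx1) (sub_nonneg.2 hq1)]

/-- The transition matrix `T` of the chain. -/
noncomputable def qTransition (q : ℝ) (i j : ℕ) : ℝ :=
  if j = i + 1 then 1 / (q ^ i + 1) else if j = i then q ^ i / (q ^ i + 1) else 0

theorem tsum_pow_mul_qTransition_le {q : ℝ} (hq : 0 ≤ q) (hq1 : q ≤ 1) (i : ℕ) :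
    ∑' j, ENNReal.ofReal (q ^ j) * ENNReal.ofReal (qTransition q i j)
      ≤ ENNReal.ofReal ((1 + q) / 2) * ENNReal.ofReal (q ^ i) := by
  have hx : 0 ≤ q ^ i := pow_nonneg hq i
  have hsupp : ∀ j ∉ ({i, i + 1} : Finset ℕ),
      ENNReal.ofReal (q ^ j) * ENNReal.ofReal (qTransition q i j) = 0 := by
    intro j hj
    simp only [Finset.mem_insert, Finset.mem_singleton, not_or] at hj
    simp [qTransition, hj.1, hj.2]
  rw [tsum_eq_sum hsupp, Finset.sum_pair (by omega), ← ENNReal.ofReal_mul hx]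
  simp only [qTransition, if_neg (show i ≠ i + 1 by omega)]
  rw [← ENNReal.ofReal_mul (by positivity), ← ENNReal.ofReal_mul (by positivity),
    ← ENNReal.ofReal_add (by positivity) (by positivity)]
  refine ENNReal.ofReal_le_ofReal ?_
  calc q ^ i * (q ^ i / (q ^ i + 1)) + q ^ (i + 1) * (1 / (q ^ i + 1))
      = (q ^ i + q) / (q ^ i + 1) * q ^ i := by ring
    _ ≤ (1 + q) / 2 * q ^ i :=
        mul_le_mul_of_nonneg_right (add_div_add_one_le hx (pow_le_one₀ hq hq1) hq1) hx

/-- The moment `E[q ^ X n]`, summed over the states of `X n`. -/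
noncomputable def qMoment {Ω : Type*} [MeasurableSpace Ω] (P : Measure Ω) (X : ℕ → Ω → ℕ)
    (q : ℝ) (n : ℕ) : ℝ≥0∞ :=
  ∑' m : ℕ, ENNReal.ofReal (q ^ m) * P {ω | X n ω = m}

namespace IsQChain

variable {Ω : Type*} [MeasurableSpace Ω] {P : Measure Ω} {X : ℕ → Ω → ℕ} {q : ℝ}

theorem measure_step (hX : IsQChain P X q) (n i j : ℕ) :
    P {ω | X n ω = i ∧ X (n + 1) ω = j}
      = ENNReal.ofReal (qTransition q i j) * P {ω | X n ω = i} := by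
  obtain ⟨hmeas, -, htrans⟩ := hX
  -- the fibres of the path `(X 0, …, X n)` are the cylinders of `IsQChain`
  refine measure_eq_mul_of_forall_fiber (Y := fun ω (k : Fin (n + 1)) => X k ω)
    (measurable_pi_lambda _ fun k => hmeas k) fun ω₀ => ?_
  have hcyl : {ω | (fun k : Fin (n + 1) => X k ω) = fun k : Fin (n + 1) => X k ω₀}
      = {ω | ∀ k ≤ n, X k ω = X k ω₀} := by
    ext ω
    simp [funext_iff, Fin.forall_iff]
  rw [hcyl]
  by_cases hi : X n ω₀ = i
  · subst hi
    obtain ⟨hup, hstay, hjump⟩ := htrans n (fun k => X k ω₀)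
    have hstate : {ω | ∀ k ≤ n, X k ω = X k ω₀} ∩ {ω | X n ω = X n ω₀}
        = {ω | ∀ k ≤ n, X k ω = X k ω₀} := inter_eq_left.2 fun ω h => h n le_rfl
    have hpath : {ω | ∀ k ≤ n, X k ω = X k ω₀} ∩ {ω | X n ω = X n ω₀ ∧ X (n + 1) ω = j}
        = {ω | (∀ k ≤ n, X k ω = X k ω₀) ∧ X (n + 1) ω = j} := by
      ext ω
      exact ⟨fun h => ⟨h.1, h.2.2⟩, fun h => ⟨h.1, h.1 n le_rfl, h.2⟩⟩
    rw [hstate, hpath, qTransition]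
    split_ifs with hj hj'
    · subst hj; exact hup
    · subst hj'; exact hstay
    · rw [hjump j hj' hj, ENNReal.ofReal_zero, zero_mul]
  · have hoff (ω : Ω) (h : ∀ k ≤ n, X k ω = X k ω₀) : X n ω ≠ i := h n le_rfl ▸ hi
    have h1 : {ω | ∀ k ≤ n, X k ω = X k ω₀} ∩ {ω | X n ω = i ∧ X (n + 1) ω = j} = ∅ :=
      eq_empty_of_forall_notMem fun ω h => hoff ω h.1 h.2.1
    have h2 : {ω | ∀ k ≤ n, X k ω = X k ω₀} ∩ {ω | X n ω = i} = ∅ :=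
      eq_empty_of_forall_notMem fun ω h => hoff ω h.1 h.2
    rw [h1, h2, measure_empty, mul_zero]

theorem qMoment_succ_le (hX : IsQChain P X q) (hq : 0 ≤ q) (hq1 : q ≤ 1) (n : ℕ) :
    qMoment P X q (n + 1) ≤ ENNReal.ofReal ((1 + q) / 2) * qMoment P X q n := by
  have hsplit (j : ℕ) : P {ω | X (n + 1) ω = j} = ∑' i, P {ω | X n ω = i ∧ X (n + 1) ω = j} :=
    measure_eq_tsum_preimage_singleton_inter (hX.1 n) _
  calc qMoment P X q (n + 1)
      = ∑' i, (∑' j, ENNReal.ofReal (q ^ j) * ENNReal.ofReal (qTransition q i j))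
          * P {ω | X n ω = i} := by
        simp only [qMoment, hsplit, hX.measure_step, ← ENNReal.tsum_mul_left,
          ← ENNReal.tsum_mul_right, mul_assoc]
        exact ENNReal.tsum_comm
    _ ≤ ∑' i, ENNReal.ofReal ((1 + q) / 2) * (ENNReal.ofReal (q ^ i) * P {ω | X n ω = i}) := by
        refine ENNReal.tsum_le_tsum fun i => ?_
        rw [← mul_assoc]
        gcongr
        exact tsum_pow_mul_qTransition_le hq hq1 i
    _ = ENNReal.ofReal ((1 + q) / 2) * qMoment P X q n := ENNReal.tsum_mul_left

theorem qMoment_le_pow [IsProbabilityMeasure P] (hX : IsQChain P X q) (hq : 0 ≤ q) (hq1 : q ≤ 1)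
    (n : ℕ) : qMoment P X q n ≤ ENNReal.ofReal ((1 + q) / 2) ^ n := by
  induction n with
  | zero =>
    calc qMoment P X q 0 ≤ ∑' m : ℕ, P {ω | X 0 ω = m} :=
          ENNReal.tsum_le_tsum fun m =>
            mul_le_of_le_one_left' (ENNReal.ofReal_le_one.2 (pow_le_one₀ hq hq1))
      _ = 1 := by
          have := measure_eq_tsum_preimage_singleton_inter (μ := P) (hX.1 0) univ
          simp only [inter_univ, measure_univ] at this
          exact this.symm
      _ = _ := (pow_zero _).symm
  | succ n ih =>
    calc qMoment P X q (n + 1) ≤ ENNReal.ofReal ((1 + q) / 2) * qMoment P X q n :=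
          hX.qMoment_succ_le hq hq1 n
      _ ≤ ENNReal.ofReal ((1 + q) / 2) * ENNReal.ofReal ((1 + q) / 2) ^ n := by gcongr
      _ = _ := (pow_succ' _ n).symm

theorem measure_stay_le_qMoment (hX : IsQChain P X q) (hq : 0 ≤ q) (n : ℕ) :
    P {ω | X (n + 1) ω = X n ω} ≤ qMoment P X q n := by
  rw [measure_eq_tsum_preimage_singleton_inter (hX.1 n)]
  refine ENNReal.tsum_le_tsum fun m => ?_
  have hfiber : X n ⁻¹' {m} ∩ {ω | X (n + 1) ω = X n ω} = {ω | X n ω = m ∧ X (n + 1) ω = m} := by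
    ext ω
    constructor <;> rintro ⟨h1, h2⟩ <;> simp_all
  rw [hfiber, hX.measure_step, qTransition, if_neg (by omega), if_pos rfl]
  gcongr
  have hx : 0 ≤ q ^ m := pow_nonneg hq m
  exact div_le_self hx (by linarith)

theorem measure_jump_eq_zero (hX : IsQChain P X q) (n : ℕ) :
    P {ω | X (n + 1) ω ≠ X n ω ∧ X (n + 1) ω ≠ X n ω + 1} = 0 := by
  have hsub : {ω | X (n + 1) ω ≠ X n ω ∧ X (n + 1) ω ≠ X n ω + 1}
      ⊆ ⋃ p ∈ {p : ℕ × ℕ | p.2 ≠ p.1 ∧ p.2 ≠ p.1 + 1}, {ω | X n ω = p.1 ∧ X (n + 1) ω = p.2} :=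
    fun ω hω => mem_biUnion (x := (X n ω, X (n + 1) ω)) hω ⟨rfl, rfl⟩
  refine measure_mono_null hsub ((measure_biUnion_null_iff (to_countable _)).2 ?_)
  rintro ⟨i, j⟩ ⟨hj, hj'⟩
  rw [hX.measure_step, qTransition, if_neg hj', if_neg hj, ENNReal.ofReal_zero, zero_mul]

theorem ae_eventually_succ [IsProbabilityMeasure P] (hX : IsQChain P X q) (hq : 0 ≤ q)
    (hq1 : q < 1) : ∀ᵐ ω ∂P, ∀ᶠ n in atTop, X (n + 1) ω = X n ω + 1 := by
  have hc : ENNReal.ofReal ((1 + q) / 2) < 1 := ENNReal.ofReal_lt_one.2 (by linarith)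
  have hsum : ∑' n, P {ω | X (n + 1) ω = X n ω} ≠ ∞ := by
    refine ne_top_of_le_ne_top ?_ (ENNReal.tsum_le_tsum fun n =>
      (hX.measure_stay_le_qMoment hq n).trans (hX.qMoment_le_pow hq hq1.le n))
    rw [ENNReal.tsum_geometric]
    exact ENNReal.inv_ne_top.2 (tsub_pos_of_lt hc).ne'
  have hjump : ∀ᵐ ω ∂P, ∀ n, ¬(X (n + 1) ω ≠ X n ω ∧ X (n + 1) ω ≠ X n ω + 1) :=
    ae_all_iff.2 fun n => measure_eq_zero_iff_ae_notMem.1 (hX.measure_jump_eq_zero n)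
  filter_upwards [ae_eventually_notMem hsum, hjump] with ω hstay hjump
  exact hstay.mono fun n hn => by have := hjump n; tauto

end IsQChain

/-- Azuma-type lower bound for `0 < q < 1`. -/
theorem stmt17 {Ω : Type*} [MeasurableSpace Ω] (P : Measure Ω) [IsProbabilityMeasure P]
    (q : ℝ) (X : ℕ → Ω → ℕ) (hq : 0 < q) (hX : IsQChain P X q) (hq1 : q < 1) :
    ∀ δ : ℝ, 0 < δ → ∀ᵐ ω ∂P, ∃ N : ℕ, ∀ n : ℕ, N ≤ n →
      (n : ℝ) - (n : ℝ) ^ ((1 : ℝ) / 2 + δ) - 1 / (1 - q) ≤ (X n ω : ℝ) := by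
  intro δ hδ
  have hq' : 0 ≤ 1 / (1 - q) := by have := sub_pos.2 hq1; positivity
  filter_upwards [hX.ae_eventually_succ hq.le hq1] with ω hω
  obtain ⟨C, hC⟩ := exists_le_add_of_eventually_succ_eq (a := fun n => X n ω) hω
  have hpow : ∀ᶠ n : ℕ in atTop, (C : ℝ) ≤ (n : ℝ) ^ ((1 : ℝ) / 2 + δ) :=
    ((tendsto_rpow_atTop (by linarith)).comp tendsto_natCast_atTop_atTop).eventually_ge_atTop _
  refine eventually_atTop.1 ((hC.and hpow).mono fun n ⟨hn, hnC⟩ => ?_)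
  have : (n : ℝ) ≤ X n ω + C := by exact_mod_cast hn
  linarith
end

section
/- (Transience to infinity for 0 < q < 1.) If 0 < q < 1, then X_n → ∞ almost surely as n → ∞. -/
open MeasureTheory Filter Topology

/-- A.s. each step either stays or goes up by one. -/
lemma qchain_steps {Ω : Type*} [MeasurableSpace Ω] (P : Measure Ω)
    (q : ℝ) (X : ℕ → Ω → ℕ) (hX : IsQChain P X q) :
    ∀ᵐ ω ∂P, ∀ n, X (n+1) ω = X n ω ∨ X (n+1) ω = X n ω + 1 := by
  rw [ae_all_iff]
  intro n
  rw [ae_iff]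
  have hcover : {ω | ¬(X (n+1) ω = X n ω ∨ X (n+1) ω = X n ω + 1)} ⊆
      ⋃ (p : (Fin (n+1) → ℕ) × ℕ),
        {ω | (∀ k ≤ n, X k ω = (fun m => if h : m < n+1 then p.1 ⟨m, h⟩ else 0) k)
          ∧ X (n+1) ω = p.2
          ∧ p.2 ≠ (fun m => if h : m < n+1 then p.1 ⟨m, h⟩ else 0) n
          ∧ p.2 ≠ (fun m => if h : m < n+1 then p.1 ⟨m, h⟩ else 0) n + 1} := by
    intro ω hω
    push_neg at hω
    refine Set.mem_iUnion.2 ⟨(fun k : Fin (n+1) => X k ω, X (n+1) ω), ?_⟩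
    have hgn : (fun m => if h : m < n+1 then X (⟨m, h⟩ : Fin (n+1)).1 ω else 0) n = X n ω := by
      simp
    refine ⟨fun k hk => ?_, rfl, ?_, ?_⟩
    · simp [Nat.lt_succ_iff.2 hk]
    · simpa using hω.1
    · simpa using hω.2
  refine measure_mono_null hcover (measure_iUnion_null fun p => ?_)
  set g : ℕ → ℕ := fun m => if h : m < n+1 then p.1 ⟨m, h⟩ else 0 with hg
  by_cases hc : p.2 ≠ g n ∧ p.2 ≠ g n + 1
  · refine measure_mono_null ?_ ((hX.2.2 n g).2.2 p.2 hc.1 hc.2)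
    intro ω h
    exact ⟨h.1, h.2.1⟩
  · have hempty : {ω : Ω | (∀ k ≤ n, X k ω = g k) ∧ X (n+1) ω = p.2
        ∧ p.2 ≠ g n ∧ p.2 ≠ g n + 1} = ∅ := by
      ext ω
      simp only [Set.mem_setOf_eq, Set.mem_empty_iff_false, iff_false, not_and]
      intro _ _ hne1 hne2
      exact hc ⟨hne1, hne2⟩
    rw [hempty]
    exact measure_empty

/-- Iterating the "stay" transition. -/
lemma qchain_stay_iter {Ω : Type*} [MeasurableSpace Ω] (P : Measure Ω)
    (q : ℝ) (X : ℕ → Ω → ℕ) (hX : IsQChain P X q) (N i : ℕ) (g : ℕ → ℕ)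
    (hg : ∀ k, N ≤ k → g k = i) :
    ∀ m, P {ω | ∀ k ≤ N + m, X k ω = g k}
      = ENNReal.ofReal (q ^ i / (q ^ i + 1)) ^ m * P {ω | ∀ k ≤ N, X k ω = g k} := by
  intro m
  induction m with
  | zero => simp
  | succ m ih =>
    have h2 := (hX.2.2 (N+m) g).2.1
    have hset : {ω | ∀ k ≤ N + (m+1), X k ω = g k}
        = {ω | (∀ k ≤ N+m, X k ω = g k) ∧ X (N+m+1) ω = g (N+m)} := by
      ext ω
      constructor
      · intro h
        refine ⟨fun k hk => h k (by omega), ?_⟩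
        rw [hg (N+m) (by omega)]
        rw [← hg (N+m+1) (by omega)]
        exact h (N+m+1) (by omega)
      · rintro ⟨h1, h2'⟩ k hk
        rcases Nat.lt_or_ge k (N+m+1) with hk' | hk'
        · exact h1 k (by omega)
        · have : k = N+m+1 := by omega
          subst this
          rw [h2', hg (N+m) (by omega), hg (N+m+1) (by omega)]
    have : P {ω | ∀ k ≤ N + (m+1), X k ω = g k}
        = ENNReal.ofReal (q ^ i / (q ^ i + 1)) * P {ω | ∀ k ≤ N + m, X k ω = g k} := by
      rw [hset, h2, hg (N+m) (by omega)]
    rw [this, ih, pow_succ]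
    ring

/-- The probability of staying at level `i` forever from time `N` is zero. -/
lemma qchain_stay_null {Ω : Type*} [MeasurableSpace Ω] (P : Measure Ω)
    [IsProbabilityMeasure P] (q : ℝ) (X : ℕ → Ω → ℕ) (hq : 0 < q)
    (hX : IsQChain P X q) (N i : ℕ) :
    P {ω | ∀ n, X (N + n) ω = i} = 0 := by
  set r : ENNReal := ENNReal.ofReal (q ^ i / (q ^ i + 1)) with hr
  have hqi : (0:ℝ) < q ^ i := pow_pos hq i
  have hrlt : r < 1 := by
    rw [hr, show (1:ENNReal) = ENNReal.ofReal 1 by simp]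
    refine (ENNReal.ofReal_lt_ofReal_iff one_pos).2 ?_
    rw [div_lt_one (by linarith)]
    linarith
  -- the "path" sets on [0, N]
  set g : (Fin (N+1) → ℕ) → ℕ → ℕ :=
    fun f m => if h : m < N+1 then f ⟨m, h⟩ else f ⟨N, N.lt_succ_self⟩ with hgdef
  have hbound : ∀ m : ℕ, P {ω | ∀ n, X (N + n) ω = i} ≤ r ^ m := by
    intro m
    have hcover : {ω | ∀ n, X (N + n) ω = i} ⊆
        ⋃ (f : Fin (N+1) → ℕ),
          {ω | f ⟨N, N.lt_succ_self⟩ = i ∧ ∀ k ≤ N + m, X k ω = g f k} := by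
      intro ω hω
      refine Set.mem_iUnion.2 ⟨fun k : Fin (N+1) => X k ω, ?_, fun k hk => ?_⟩
      · exact hω 0
      · rcases Nat.lt_or_ge k (N+1) with hk' | hk'
        · simp [hgdef, hk', Nat.lt_succ_iff.1 hk']
        · have h1 : X k ω = i := by
            have := hω (k - N); rwa [Nat.add_sub_cancel' (by omega)] at this
          have h2 : X N ω = i := by simpa using hω 0
          simp [hgdef, Nat.not_lt.2 hk', h1, h2]
    have hsum : P {ω | ∀ n, X (N + n) ω = i}
        ≤ ∑' f : Fin (N+1) → ℕ,
            P {ω | f ⟨N, N.lt_succ_self⟩ = i ∧ ∀ k ≤ N + m, X k ω = g f k} :=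
      (measure_mono hcover).trans (measure_iUnion_le _)
    have hterm : ∀ f : Fin (N+1) → ℕ,
        P {ω | f ⟨N, N.lt_succ_self⟩ = i ∧ ∀ k ≤ N + m, X k ω = g f k}
          ≤ r ^ m * P {ω | ∀ k ≤ N, X k ω = g f k} := by
      intro f
      by_cases hf : f ⟨N, N.lt_succ_self⟩ = i
      · have hgi : ∀ k, N ≤ k → g f k = i := by
          intro k hk
          rcases Nat.lt_or_ge k (N+1) with hk' | hk'
          · have : k = N := by omega
            subst this
            simp [hgdef, hk', hf]
          · simp [hgdef, Nat.not_lt.2 hk', hf]; intro h; omega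
        have := qchain_stay_iter P q X hX N i (g f) hgi m
        calc P {ω | f ⟨N, N.lt_succ_self⟩ = i ∧ ∀ k ≤ N + m, X k ω = g f k}
            ≤ P {ω | ∀ k ≤ N + m, X k ω = g f k} := measure_mono fun ω h => h.2
          _ = r ^ m * P {ω | ∀ k ≤ N, X k ω = g f k} := this
      · have : {ω : Ω | f ⟨N, N.lt_succ_self⟩ = i ∧ ∀ k ≤ N + m, X k ω = g f k} = ∅ := by
          ext ω; simp [hf]
        simp [this]
    have hdisj : Pairwise (Function.onFun Disjoint
        (fun f : Fin (N+1) → ℕ => {ω | ∀ k ≤ N, X k ω = g f k})) := by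
      intro f1 f2 hne
      rw [Function.onFun, Set.disjoint_left]
      intro ω h1 h2
      apply hne
      funext j
      have e1 := h1 j.1 (Nat.lt_succ_iff.1 j.2)
      have e2 := h2 j.1 (Nat.lt_succ_iff.1 j.2)
      have : g f1 j.1 = g f2 j.1 := by rw [← e1, ← e2]
      simpa [hgdef, j.2, Nat.lt_succ_iff.1 j.2] using this
    have hmeas : ∀ f : Fin (N+1) → ℕ,
        MeasurableSet {ω | ∀ k ≤ N, X k ω = g f k} := by
      intro f
      have : {ω | ∀ k ≤ N, X k ω = g f k} = ⋂ k ∈ Set.Iic N, X k ⁻¹' {g f k} := by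
        ext ω; simp [Set.mem_iInter]
      rw [this]
      exact MeasurableSet.biInter (Set.to_countable _)
        (fun k _ => (hX.1 k) (measurableSet_singleton _))
    have hsum1 : ∑' f : Fin (N+1) → ℕ, P {ω | ∀ k ≤ N, X k ω = g f k} ≤ 1 := by
      rw [← measure_iUnion hdisj hmeas]
      exact prob_le_one
    calc P {ω | ∀ n, X (N + n) ω = i}
        ≤ ∑' f : Fin (N+1) → ℕ,
            P {ω | f ⟨N, N.lt_succ_self⟩ = i ∧ ∀ k ≤ N + m, X k ω = g f k} := hsum
      _ ≤ ∑' f : Fin (N+1) → ℕ, r ^ m * P {ω | ∀ k ≤ N, X k ω = g f k} :=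
          ENNReal.tsum_le_tsum hterm
      _ = r ^ m * ∑' f : Fin (N+1) → ℕ, P {ω | ∀ k ≤ N, X k ω = g f k} :=
          ENNReal.tsum_mul_left
      _ ≤ r ^ m * 1 := mul_le_mul_right hsum1 _
      _ = r ^ m := mul_one _
  have htend : Tendsto (fun m : ℕ => r ^ m) atTop (𝓝 0) :=
    ENNReal.tendsto_pow_atTop_nhds_zero_of_lt_one hrlt
  have : P {ω | ∀ n, X (N + n) ω = i} ≤ 0 :=
    ge_of_tendsto htend (Filter.Eventually.of_forall hbound)
  exact le_antisymm this zero_le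

/-- Transience to infinity for `0 < q < 1`. -/
theorem stmt18 {Ω : Type*} [MeasurableSpace Ω] (P : Measure Ω) [IsProbabilityMeasure P]
    (q : ℝ) (X : ℕ → Ω → ℕ) (hq : 0 < q) (hX : IsQChain P X q) (hq1 : q < 1) :
    ∀ᵐ ω ∂P, Tendsto (fun n : ℕ => X n ω) atTop atTop := by
  have hA := qchain_steps P q X hX
  have hB : ∀ᵐ ω ∂P, ∀ p : ℕ × ℕ, ¬ ∀ n, X (p.1 + n) ω = p.2 := by
    rw [ae_all_iff]
    intro p
    rw [ae_iff]
    simpa using qchain_stay_null P q X hq hX p.1 p.2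
  filter_upwards [hA, hB] with ω h1 h2
  set u : ℕ → ℕ := fun n => X n ω with hu
  have hmono : Monotone u := by
    apply monotone_nat_of_le_succ
    intro n
    rcases h1 n with h | h <;> simp [hu] <;> omega
  by_contra hT
  rw [tendsto_atTop_atTop] at hT
  push_neg at hT
  obtain ⟨b, hb⟩ := hT
  have hub : ∀ n, u n < b := by
    intro n
    obtain ⟨a, ha, hab⟩ := hb n
    exact lt_of_le_of_lt (hmono ha) hab
  have hbdd : BddAbove (Set.range u) := ⟨b, fun x ⟨n, hn⟩ => hn ▸ (hub n).le⟩
  obtain ⟨Nm, hNm⟩ := Nat.sSup_mem (Set.range_nonempty u) hbdd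
  refine h2 (Nm, u Nm) fun n => ?_
  have hle : u (Nm + n) ≤ sSup (Set.range u) := le_csSup hbdd (Set.mem_range_self _)
  have hge : u Nm ≤ u (Nm + n) := hmono (Nat.le_add_right _ _)
  rw [← hNm] at hle
  exact le_antisymm hle hge
end

section
/- (L² boundedness of the martingale for 0 < q < 1.) If 0 < q < 1 and Y_n := X_n − n + (1 − q^{X_n})/(1 − q), then sup_{n ≥ 0} E[Y_n^2] < ∞; in particular the martingale (Y_n) is bounded in L¹ and converges almost surely to a random variable Y_∞. -/
open MeasureTheory Filter Topology

open ENNReal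
namespace QAux

variable {Ω : Type*} [MeasurableSpace Ω]

/-- extend a finite path to `ℕ → ℕ` by zero -/
def ext (n : ℕ) (f : Fin (n+1) → ℕ) : ℕ → ℕ := fun k => if h : k < n+1 then f ⟨k, h⟩ else 0

lemma ext_eq (n : ℕ) (f : Fin (n+1) → ℕ) (k : ℕ) (h : k < n + 1) : ext n f k = f ⟨k, h⟩ := by
  simp [ext, h]

lemma ext_last (n : ℕ) (f : Fin (n+1) → ℕ) : ext n f n = f (Fin.last n) :=
  ext_eq n f n (Nat.lt_succ_self n)

lemma pathMeas (X : ℕ → Ω → ℕ) (hm : ∀ n, Measurable (X n)) (n : ℕ) (f : ℕ → ℕ) :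
    MeasurableSet {ω | ∀ k ≤ n, X k ω = f k} := by
  have : {ω | ∀ k ≤ n, X k ω = f k} = ⋂ k ∈ Set.Iic n, X k ⁻¹' {f k} := by
    ext ω; simp [Set.mem_iInter]
  rw [this]
  exact MeasurableSet.biInter (Set.to_countable _)
    (fun k _ => (hm k) (measurableSet_singleton _))

lemma keyR (P : Measure Ω) [IsProbabilityMeasure P] (X : ℕ → Ω → ℕ) (q : ℝ)
    (hX : IsQChain P X q) (n : ℕ) (g : ℕ → ℕ → ℝ≥0∞) :
    ∫⁻ ω, g (X n ω) (X (n+1) ω) ∂P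
      = ∑' f : Fin (n+1) → ℕ,
          (ENNReal.ofReal (1/(q ^ (f (Fin.last n)) + 1)) * g (f (Fin.last n)) (f (Fin.last n) + 1)
           + ENNReal.ofReal (q ^ (f (Fin.last n)) / (q ^ (f (Fin.last n)) + 1))
              * g (f (Fin.last n)) (f (Fin.last n)))
            * P {ω | ∀ k ≤ n, X k ω = ext n f k} := by
  classical
  set s : (Fin (n+1) → ℕ) × ℕ → Set Ω :=
    fun p => {ω | (∀ k ≤ n, X k ω = ext n p.1 k) ∧ X (n+1) ω = p.2} with hs
  have hmeas : ∀ p, MeasurableSet (s p) := by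
    intro p
    have : s p = {ω | ∀ k ≤ n, X k ω = ext n p.1 k} ∩ X (n+1) ⁻¹' {p.2} := by
      ext ω; simp [hs, Set.mem_setOf_eq]
    rw [this]
    exact (pathMeas X hX.1 n _).inter ((hX.1 (n+1)) (measurableSet_singleton _))
  have hdisj : Pairwise (Function.onFun Disjoint s) := by
    intro p p' hne
    rw [Function.onFun, Set.disjoint_left]
    rintro ω ⟨h1, h2⟩ ⟨h1', h2'⟩
    apply hne
    have hfst : p.1 = p'.1 := by
      funext i
      have := (h1 i (Nat.lt_succ_iff.mp i.isLt)).symm.trans (h1' i (Nat.lt_succ_iff.mp i.isLt))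
      rwa [ext_eq n p.1 i i.isLt, ext_eq n p'.1 i i.isLt] at this
    have hsnd : p.2 = p'.2 := h2.symm.trans h2'
    exact Prod.ext hfst hsnd
  have hcover : (⋃ p, s p) = Set.univ := by
    ext ω
    simp only [Set.mem_iUnion, Set.mem_univ, iff_true]
    refine ⟨⟨fun i => X i ω, X (n+1) ω⟩, fun k hk => ?_, rfl⟩
    rw [ext_eq n _ k (Nat.lt_succ_of_le hk)]
  calc ∫⁻ ω, g (X n ω) (X (n+1) ω) ∂P
      = ∫⁻ ω in ⋃ p, s p, g (X n ω) (X (n+1) ω) ∂P := by rw [hcover, setLIntegral_univ]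
    _ = ∑' p, ∫⁻ ω in s p, g (X n ω) (X (n+1) ω) ∂P := lintegral_iUnion hmeas hdisj _
    _ = ∑' p : (Fin (n+1) → ℕ) × ℕ, g (p.1 (Fin.last n)) p.2 * P (s p) := by
        refine tsum_congr fun p => ?_
        rw [setLIntegral_congr_fun (hmeas p) ?_, setLIntegral_const]
        intro ω hω; dsimp only
        rcases hω with ⟨h1, h2⟩
        rw [h2, h1 n le_rfl, ext_last]
    _ = ∑' (f : Fin (n+1) → ℕ) (j : ℕ), g (f (Fin.last n)) j * P (s (f, j)) :=
        (ENNReal.tsum_prod (f := fun a b => g (a (Fin.last n)) b * P (s (a, b))))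
    _ = _ := by
        refine tsum_congr fun f => ?_
        set i := f (Fin.last n) with hi
        obtain ⟨hup, hstay, hoth⟩ := hX.2.2 n (ext n f)
        have hin : ext n f n = i := ext_last n f
        rw [hin] at hup hstay hoth
        have hvan : ∀ j ∉ ({i, i+1} : Finset ℕ),
            g (f (Fin.last n)) j * P (s (f, j)) = 0 := by
          intro j hj
          simp only [Finset.mem_insert, Finset.mem_singleton, not_or] at hj
          rw [hs]
          simp only
          rw [hoth j hj.1 hj.2, mul_zero]
        rw [tsum_eq_sum hvan, Finset.sum_pair (Nat.ne_of_lt (Nat.lt_succ_self i))]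
        rw [hs]
        simp only
        rw [hup, hstay]
        ring
lemma Tsum_one {q : ℝ} (hq : 0 < q) (i : ℕ) :
    ENNReal.ofReal (1/(q ^ i + 1)) + ENNReal.ofReal (q ^ i / (q ^ i + 1)) = 1 := by
  have ht : (0:ℝ) < q ^ i := pow_pos hq i
  rw [← ENNReal.ofReal_add (by positivity) (by positivity), ← ENNReal.ofReal_one]
  congr 1
  field_simp
  ring

lemma lemA (P : Measure Ω) [IsProbabilityMeasure P] (X : ℕ → Ω → ℕ) (q : ℝ) (hq : 0 < q)
    (hX : IsQChain P X q) (n : ℕ) (h : ℕ → ℝ≥0∞) :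
    ∫⁻ ω, h (X n ω) ∂P
      = ∑' f : Fin (n+1) → ℕ,
          h (f (Fin.last n)) * P {ω | ∀ k ≤ n, X k ω = ext n f k} := by
  rw [keyR P X q hX n (fun i _ => h i)]
  refine tsum_congr fun f => ?_
  rw [← add_mul, ← mul_comm (h (f (Fin.last n)))]
  rw [Tsum_one hq, mul_one]

noncomputable def psi (q : ℝ) (i : ℕ) : ℝ := (i : ℝ) + (1 - q ^ i) / (1 - q)

/-- the elementary quadratic identity behind the conditional variance computation -/
lemma quadId (t a : ℝ) (ht : 0 < t) :
    1/(t+1) * (a+t)^2 + t/(t+1) * (a-1)^2 = a^2 + t := by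
  field_simp
  ring

lemma psi_succ {q : ℝ} (hq1 : q < 1) (i : ℕ) : psi q (i+1) = psi q i + 1 + q ^ i := by
  have h1 : (1:ℝ) - q ≠ 0 := by linarith
  simp only [psi, pow_succ]
  push_cast
  field_simp
  ring

lemma real_m {q t : ℝ} (hq : 0 < q) (hq1 : q < 1) (ht : 0 < t) (ht1 : t ≤ 1) :
    1/(t+1) * (t * q) + t/(t+1) * t ≤ (1+q)/2 * t := by
  rw [div_mul_eq_mul_div, div_mul_eq_mul_div, ← add_div,
    div_le_iff₀ (by positivity)]
  nlinarith [mul_nonneg (sub_nonneg.mpr hq1.le) (sub_nonneg.mpr ht1)]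

variable (P : Measure Ω) [IsProbabilityMeasure P] (X : ℕ → Ω → ℕ) (q : ℝ)

noncomputable def mQ (n : ℕ) : ℝ≥0∞ := ∫⁻ ω, ENNReal.ofReal (q ^ X n ω) ∂P

noncomputable def eQ (n : ℕ) : ℝ≥0∞ := ∫⁻ ω, ENNReal.ofReal ((psi q (X n ω) - (n:ℝ))^2) ∂P

variable {P X q}

lemma mQ_zero (hX : IsQChain P X q) : mQ P X q 0 = 1 := by
  have : ∀ᵐ ω ∂P, ENNReal.ofReal (q ^ X 0 ω) = 1 := by
    filter_upwards [hX.2.1] with ω h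
    rw [h, pow_zero, ENNReal.ofReal_one]
  rw [mQ, lintegral_congr_ae this, lintegral_one, measure_univ]

lemma mQ_succ (hq : 0 < q) (hq1 : q < 1) (hX : IsQChain P X q) (n : ℕ) :
    mQ P X q (n+1) ≤ ENNReal.ofReal ((1+q)/2) * mQ P X q n := by
  have hXn : mQ P X q n = ∑' f : Fin (n+1) → ℕ,
      ENNReal.ofReal (q ^ (f (Fin.last n))) * P {ω | ∀ k ≤ n, X k ω = ext n f k} := by
    rw [mQ]; exact lemA P X q hq hX n (fun i => ENNReal.ofReal (q ^ i))
  rw [mQ, keyR P X q hX n (fun _ j => ENNReal.ofReal (q ^ j)), hXn,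
    ← ENNReal.tsum_mul_left]
  refine Summable.tsum_le_tsum (fun f => ?_) ENNReal.summable ENNReal.summable
  set i := f (Fin.last n)
  rw [← mul_assoc]
  refine mul_le_mul_left ?_ _
  have ht : (0:ℝ) < q ^ i := pow_pos hq i
  have ht1 : q ^ i ≤ 1 := pow_le_one₀ hq.le hq1.le
  rw [pow_succ, ← ENNReal.ofReal_mul (by positivity), ← ENNReal.ofReal_mul (by positivity),
    ← ENNReal.ofReal_add (by positivity) (by positivity),
    ← ENNReal.ofReal_mul (by positivity)]
  exact ENNReal.ofReal_le_ofReal (real_m hq hq1 ht ht1)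

lemma mQ_le (hq : 0 < q) (hq1 : q < 1) (hX : IsQChain P X q) (n : ℕ) :
    mQ P X q n ≤ (ENNReal.ofReal ((1+q)/2))^n := by
  induction n with
  | zero => rw [mQ_zero hX, pow_zero]
  | succ n ih =>
    calc mQ P X q (n+1) ≤ ENNReal.ofReal ((1+q)/2) * mQ P X q n := mQ_succ hq hq1 hX n
      _ ≤ ENNReal.ofReal ((1+q)/2) * (ENNReal.ofReal ((1+q)/2))^n := mul_le_mul_right ih _
      _ = (ENNReal.ofReal ((1+q)/2))^(n+1) := (pow_succ' _ _).symm

lemma eQ_zero (hX : IsQChain P X q) : eQ P X q 0 = 0 := by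
  have : ∀ᵐ ω ∂P, ENNReal.ofReal ((psi q (X 0 ω) - (0:ℕ))^2) = 0 := by
    filter_upwards [hX.2.1] with ω h
    rw [h]
    simp [psi]
  rw [eQ, lintegral_congr_ae this, lintegral_zero]

lemma eQ_succ (hq : 0 < q) (hq1 : q < 1) (hX : IsQChain P X q) (n : ℕ) :
    eQ P X q (n+1) = eQ P X q n + mQ P X q n := by
  have hXn : eQ P X q n = ∑' f : Fin (n+1) → ℕ,
      ENNReal.ofReal ((psi q (f (Fin.last n)) - (n:ℝ))^2)
        * P {ω | ∀ k ≤ n, X k ω = ext n f k} := by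
    rw [eQ]; exact lemA P X q hq hX n (fun i => ENNReal.ofReal ((psi q i - (n:ℝ))^2))
  have hMn : mQ P X q n = ∑' f : Fin (n+1) → ℕ,
      ENNReal.ofReal (q ^ (f (Fin.last n))) * P {ω | ∀ k ≤ n, X k ω = ext n f k} := by
    rw [mQ]; exact lemA P X q hq hX n (fun i => ENNReal.ofReal (q ^ i))
  rw [eQ, keyR P X q hX n (fun _ j => ENNReal.ofReal ((psi q j - ((n+1:ℕ):ℝ))^2)),
    hXn, hMn, ← ENNReal.tsum_add]
  refine tsum_congr fun f => ?_
  set i := f (Fin.last n)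
  have ht : (0:ℝ) < q ^ i := pow_pos hq i
  rw [← add_mul]
  congr 1
  have h1 : psi q (i+1) - ((n+1:ℕ):ℝ) = (psi q i - n) + q ^ i := by
    rw [psi_succ hq1]; push_cast; ring
  have h2 : psi q i - ((n+1:ℕ):ℝ) = (psi q i - n) - 1 := by push_cast; ring
  rw [h1, h2,
    ← ENNReal.ofReal_mul (by positivity), ← ENNReal.ofReal_mul (by positivity),
    ← ENNReal.ofReal_add (by positivity) (by positivity),
    ← ENNReal.ofReal_add (by positivity) (by positivity)]
  exact congrArg _ (quadId (q^i) (psi q i - n) ht)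

lemma eQ_le (hq : 0 < q) (hq1 : q < 1) (hX : IsQChain P X q) (n : ℕ) :
    eQ P X q n ≤ (1 - ENNReal.ofReal ((1+q)/2))⁻¹ := by
  have key : ∀ n, eQ P X q n ≤ ∑ k ∈ Finset.range n, (ENNReal.ofReal ((1+q)/2))^k := by
    intro n
    induction n with
    | zero => simp [eQ_zero hX]
    | succ n ih =>
      rw [eQ_succ hq hq1 hX n, Finset.sum_range_succ]
      exact add_le_add ih (mQ_le hq hq1 hX n)
  calc eQ P X q n ≤ ∑ k ∈ Finset.range n, (ENNReal.ofReal ((1+q)/2))^k := key n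
    _ ≤ ∑' k : ℕ, (ENNReal.ofReal ((1+q)/2))^k := ENNReal.sum_le_tsum _
    _ = (1 - ENNReal.ofReal ((1+q)/2))⁻¹ := ENNReal.tsum_geometric _

lemma stay_le (hq : 0 < q) (hX : IsQChain P X q) (n : ℕ) :
    P {ω | X (n+1) ω = X n ω} ≤ mQ P X q n := by
  classical
  have hMn : mQ P X q n = ∑' f : Fin (n+1) → ℕ,
      ENNReal.ofReal (q ^ (f (Fin.last n))) * P {ω | ∀ k ≤ n, X k ω = ext n f k} := by
    rw [mQ]; exact lemA P X q hq hX n (fun i => ENNReal.ofReal (q ^ i))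
  have hmeas : MeasurableSet {ω | X (n+1) ω = X n ω} :=
    measurableSet_eq_fun (hX.1 (n+1)) (hX.1 n)
  have hind : P {ω | X (n+1) ω = X n ω}
      = ∫⁻ ω, (fun i j => if j = i then (1:ℝ≥0∞) else 0) (X n ω) (X (n+1) ω) ∂P := by
    rw [← lintegral_indicator_one hmeas]
    refine lintegral_congr fun ω => ?_
    by_cases h : X (n+1) ω = X n ω <;>
      simp [Set.indicator_apply, Set.mem_setOf_eq, h]
  rw [hind, keyR P X q hX n (fun i j => if j = i then (1:ℝ≥0∞) else 0), hMn]
  refine Summable.tsum_le_tsum (fun f => ?_) ENNReal.summable ENNReal.summable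
  set i := f (Fin.last n)
  refine mul_le_mul_left ?_ _
  have ht : (0:ℝ) < q ^ i := pow_pos hq i
  rw [if_neg (Nat.succ_ne_self i), if_pos rfl, mul_zero, mul_one, zero_add]
  refine ENNReal.ofReal_le_ofReal ?_
  rw [div_le_iff₀ (by positivity)]
  nlinarith

lemma badstep (hX : IsQChain P X q) (n : ℕ) :
    P {ω | ¬(X (n+1) ω = X n ω ∨ X (n+1) ω = X n ω + 1)} = 0 := by
  classical
  have hmeas : MeasurableSet {ω | ¬(X (n+1) ω = X n ω ∨ X (n+1) ω = X n ω + 1)} := by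
    have h1 : MeasurableSet {ω | X (n+1) ω = X n ω} :=
      measurableSet_eq_fun (hX.1 (n+1)) (hX.1 n)
    have h2 : MeasurableSet {ω | X (n+1) ω = X n ω + 1} :=
      measurableSet_eq_fun (hX.1 (n+1)) ((hX.1 n).add_const 1)
    have : {ω | ¬(X (n+1) ω = X n ω ∨ X (n+1) ω = X n ω + 1)}
        = ({ω | X (n+1) ω = X n ω} ∪ {ω | X (n+1) ω = X n ω + 1})ᶜ := by
      ext ω; simp [Set.mem_setOf_eq, not_or]
    rw [this]; exact (h1.union h2).compl
  have hind : P {ω | ¬(X (n+1) ω = X n ω ∨ X (n+1) ω = X n ω + 1)}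
      = ∫⁻ ω, (fun i j => if ¬(j = i ∨ j = i + 1) then (1:ℝ≥0∞) else 0)
          (X n ω) (X (n+1) ω) ∂P := by
    rw [← lintegral_indicator_one hmeas]
    refine lintegral_congr fun ω => ?_
    simp only [Set.indicator_apply, Set.mem_setOf_eq]
    rcases Classical.em (X (n+1) ω = X n ω ∨ X (n+1) ω = X n ω + 1) with h | h
    · rw [if_neg (not_not_intro h), if_neg (not_not_intro h)]
    · rw [if_pos h, if_pos h]
      rfl
  rw [hind, keyR P X q hX n (fun i j => if ¬(j = i ∨ j = i + 1) then (1:ℝ≥0∞) else 0)]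
  refine ENNReal.summable.tsum_eq_zero_iff.mpr fun f => ?_
  set i := f (Fin.last n)
  rw [if_neg (not_not_intro (Or.inr rfl)), if_neg (not_not_intro (Or.inl rfl)),
    mul_zero, mul_zero, add_zero, zero_mul]

end QAux

/-- `L²` boundedness of the martingale for `0 < q < 1`, boundedness in `L¹`,
and almost sure convergence. -/
theorem stmt19 {Ω : Type*} [MeasurableSpace Ω] (P : Measure Ω) [IsProbabilityMeasure P]
    (q : ℝ) (X : ℕ → Ω → ℕ) (hq : 0 < q) (hX : IsQChain P X q) (hq1 : q < 1)
    (Y : ℕ → Ω → ℝ)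
    (hY : ∀ n ω, Y n ω = (X n ω : ℝ) - n + (1 - q ^ X n ω) / (1 - q)) :
    (∃ M : ℝ, ∀ n : ℕ, ∫ ω, (Y n ω) ^ 2 ∂P ≤ M) ∧
      (∃ M : ℝ, ∀ n : ℕ, ∫ ω, |Y n ω| ∂P ≤ M) ∧
      ∃ Yinf : Ω → ℝ, Measurable Yinf ∧
        ∀ᵐ ω ∂P, Tendsto (fun n : ℕ => Y n ω) atTop (𝓝 (Yinf ω)) := by
  classical
  have hq' : (1:ℝ) - q ≠ 0 := by linarith
  set c : ℝ≥0∞ := ENNReal.ofReal ((1+q)/2) with hc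
  have hc1 : c < 1 := by rw [hc]; exact ENNReal.ofReal_lt_one.mpr (by linarith)
  have hE : (1 - c) ≠ 0 := by
    simp only [ne_eq, tsub_eq_zero_iff_le, not_le]; exact hc1
  have hEtop : (1 - c)⁻¹ ≠ ⊤ := ENNReal.inv_ne_top.mpr hE
  have hY2 : ∀ n ω, Y n ω = QAux.psi q (X n ω) - (n:ℝ) := by
    intro n ω; rw [hY]; simp only [QAux.psi]; ring
  have hYm : ∀ n, Measurable (Y n) := by
    intro n
    have h' : Y n = fun ω => QAux.psi q (X n ω) - (n:ℝ) := funext (hY2 n)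
    rw [h']
    exact (measurable_from_top (f := fun i : ℕ => QAux.psi q i - (n:ℝ))).comp (hX.1 n)
  have heY : ∀ n, ∫⁻ ω, ENNReal.ofReal ((Y n ω)^2) ∂P = QAux.eQ P X q n := by
    intro n; rw [QAux.eQ]; exact lintegral_congr fun ω => by rw [hY2]
  refine ⟨⟨((1 - c)⁻¹).toReal, fun n => ?_⟩, ⟨(1 + (1 - c)⁻¹).toReal, fun n => ?_⟩, ?_⟩
  · rw [integral_eq_lintegral_of_nonneg_ae (ae_of_all _ fun ω => sq_nonneg _)
      ((hYm n).pow_const 2).aestronglyMeasurable, heY n]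
    exact ENNReal.toReal_mono hEtop (QAux.eQ_le hq hq1 hX n)
  · rw [integral_eq_lintegral_of_nonneg_ae (ae_of_all _ fun ω => abs_nonneg _)
      (hYm n).abs.aestronglyMeasurable]
    refine ENNReal.toReal_mono (ENNReal.add_ne_top.mpr ⟨ENNReal.one_ne_top, hEtop⟩) ?_
    calc ∫⁻ ω, ENNReal.ofReal |Y n ω| ∂P
        ≤ ∫⁻ ω, (1 + ENNReal.ofReal ((Y n ω)^2)) ∂P := by
          refine lintegral_mono fun ω => ?_
          have habs : |Y n ω| ≤ 1 + (Y n ω)^2 := by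
            nlinarith [sq_nonneg (|Y n ω| - 1), sq_abs (Y n ω), abs_nonneg (Y n ω)]
          calc ENNReal.ofReal |Y n ω| ≤ ENNReal.ofReal (1 + (Y n ω)^2) :=
                ENNReal.ofReal_le_ofReal habs
            _ = 1 + ENNReal.ofReal ((Y n ω)^2) := by
                rw [ENNReal.ofReal_add one_pos.le (sq_nonneg _), ENNReal.ofReal_one]
      _ = 1 + QAux.eQ P X q n := by
          rw [lintegral_add_left measurable_const, lintegral_one, measure_univ, heY n]
      _ ≤ 1 + (1 - c)⁻¹ := add_le_add_right (QAux.eQ_le hq hq1 hX n) 1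
  · have hsum : ∑' n : ℕ, P {ω | X (n+1) ω = X n ω} ≠ ⊤ := by
      refine ne_top_of_le_ne_top hEtop ?_
      calc ∑' n : ℕ, P {ω | X (n+1) ω = X n ω}
          ≤ ∑' n : ℕ, c^n :=
            Summable.tsum_le_tsum (fun n => (QAux.stay_le hq hX n).trans (QAux.mQ_le hq hq1 hX n))
              ENNReal.summable ENNReal.summable
        _ = (1-c)⁻¹ := ENNReal.tsum_geometric c
    have hfreq : ∀ᵐ ω ∂P, ∀ᶠ n in atTop, ¬ X (n+1) ω = X n ω := by
      rw [ae_iff]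
      have hset : {ω | ¬ ∀ᶠ n in atTop, ¬ X (n+1) ω = X n ω}
          = {ω | ∃ᶠ n in atTop, X (n+1) ω = X n ω} := by
        ext ω; simp [Filter.not_eventually, Filter.frequently_atTop]
      rw [hset]
      exact measure_setOf_frequently_eq_zero hsum
    have hstep : ∀ᵐ ω ∂P, ∀ n, X (n+1) ω = X n ω ∨ X (n+1) ω = X n ω + 1 := by
      rw [ae_all_iff]
      intro n
      rw [ae_iff]
      exact QAux.badstep hX n
    have hconv : ∀ᵐ ω ∂P, ∃ L, Tendsto (fun n => Y n ω) atTop (𝓝 L) := by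
      filter_upwards [hfreq, hstep] with ω h1 h2
      obtain ⟨N, hN⟩ := eventually_atTop.mp h1
      have hup : ∀ n, N ≤ n → X (n+1) ω = X n ω + 1 := fun n hn =>
        (h2 n).resolve_left (hN n hn)
      have hlin : ∀ m, X (N + m) ω = X N ω + m := by
        intro m
        induction m with
        | zero => simp
        | succ m ih => rw [← Nat.add_assoc, hup (N+m) (Nat.le_add_right N m), ih, Nat.add_assoc]
      have hXn : ∀ n, N ≤ n → X n ω = X N ω + (n - N) := by
        intro n hn
        have := hlin (n - N)
        rwa [Nat.add_sub_cancel' hn] at this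
      have htX : Tendsto (fun n => X n ω) atTop atTop := by
        refine tendsto_atTop_mono (fun n => ?_) (tendsto_sub_atTop_nat N)
        rcases le_or_gt N n with h | h
        · rw [hXn n h]; omega
        · omega
      have hq0 : Tendsto (fun n => q ^ X n ω) atTop (𝓝 0) :=
        (tendsto_pow_atTop_nhds_zero_of_lt_one hq.le hq1).comp htX
      refine ⟨(X N ω : ℝ) - N + (1 - 0)/(1-q), ?_⟩
      have hmain : Tendsto (fun n => (X N ω : ℝ) - N + (1 - q ^ X n ω)/(1-q)) atTop
          (𝓝 ((X N ω : ℝ) - N + (1 - 0)/(1-q))) :=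
        tendsto_const_nhds.add ((tendsto_const_nhds.sub hq0).div_const _)
      refine Tendsto.congr' ?_ hmain
      filter_upwards [eventually_ge_atTop N] with n hn
      rw [hY n ω, hXn n hn]
      have : ((n - N : ℕ) : ℝ) = (n : ℝ) - N := by
        push_cast [Nat.cast_sub hn]; ring
      push_cast [this]
      ring
    obtain ⟨Yinf, hYinfm, htend⟩ :=
      measurable_limit_of_tendsto_metrizable_ae (fun n => (hYm n).aemeasurable) hconv
    exact ⟨Yinf, hYinfm, htend⟩
end
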